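/- arXiv:2010.02829 — 2 statements merged into one kernel-verified Lean document; each statement's English description precedes it below -/
import Mathlib

section
/- If a finite abelian group G of order v > 1 admits a Legendre pair, then v is odd. -/
open Finset

private lemma shift_sum {G : Type*} [AddCommGroup G] [Fintype G] (f : G → ℤ) (x : G) :
    ∑ s : G, f (x + s) = ∑ y : G, f y :=
  Fintype.sum_equiv (Equiv.addLeft x) _ _ (fun s => rfl)

/-- If a finite abelian group `G` of order `v > 1` admits a
Legendre pair, then `v` is odd. -/
theorem odd_of_legendre_pair
    {G : Type*} [AddCommGroup G] [Fintype G]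
    (v : ℕ) (hv : Fintype.card G = v) (hv1 : 1 < v)
    (f g : G → ℤ)
    (hf : ∀ x, f x = 1 ∨ f x = -1) (hg : ∀ x, g x = 1 ∨ g x = -1)
    (hL : ∀ s : G, s ≠ 0 →
        (∑ x : G, f x * f (x + s)) + (∑ x : G, g x * g (x + s)) = -2) :
    Odd v := by
  classical
  set F : ℤ := ∑ x : G, f x with hF
  set Gg : ℤ := ∑ x : G, g x with hGg
  have sq : ∀ (h : G → ℤ), (∀ x, h x = 1 ∨ h x = -1) →
      ∑ s : G, ∑ x : G, h x * h (x + s) = (∑ x : G, h x)^2 := by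
    intro h hh
    rw [Finset.sum_comm]
    rw [sq]
    rw [Finset.sum_mul]
    refine Finset.sum_congr rfl fun x _ => ?_
    rw [← Finset.mul_sum, shift_sum]
  have key : F^2 + Gg^2 = 2 := by
    have h0 : (0:G) ∈ Finset.univ := Finset.mem_univ 0
    have hself : ∀ (h : G → ℤ), (∀ x, h x = 1 ∨ h x = -1) →
        ∑ x : G, h x * h (x + (0:G)) = (v : ℤ) := by
      intro h hh
      have : ∀ x : G, h x * h (x + 0) = 1 := by
        intro x; rcases hh x with h1 | h1 <;> simp [h1]
      rw [Finset.sum_congr rfl fun x _ => this x]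
      simp [hv]
    have split : ∑ s : G, ((∑ x : G, f x * f (x + s)) + (∑ x : G, g x * g (x + s)))
        = (v:ℤ) + (v:ℤ) + ∑ s ∈ Finset.univ.erase (0:G),
            ((∑ x : G, f x * f (x + s)) + (∑ x : G, g x * g (x + s))) := by
      rw [← Finset.add_sum_erase _ _ h0, hself f hf, hself g hg]
    have herase : ∑ s ∈ Finset.univ.erase (0:G),
        ((∑ x : G, f x * f (x + s)) + (∑ x : G, g x * g (x + s))) = -2 * ((v:ℤ) - 1) := by
      rw [Finset.sum_congr rfl (fun s hs => hL s (Finset.ne_of_mem_erase hs))]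
      rw [Finset.sum_const]
      rw [Finset.card_erase_of_mem h0, Finset.card_univ, hv, nsmul_eq_mul,
        Nat.cast_sub hv1.le]
      push_cast
      ring
    have lhs : ∑ s : G, ((∑ x : G, f x * f (x + s)) + (∑ x : G, g x * g (x + s)))
        = F^2 + Gg^2 := by
      rw [Finset.sum_add_distrib, sq f hf, sq g hg]
    rw [split, herase] at lhs
    have hv' : (1:ℤ) ≤ v := by exact_mod_cast hv1.le
    linarith [lhs]
  -- parity: v - F and v - Gg are even
  have heven : ∀ (h : G → ℤ), (∀ x, h x = 1 ∨ h x = -1) → Even ((v:ℤ) - ∑ x : G, h x) := by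
    intro h hh
    have : (v:ℤ) - ∑ x : G, h x = ∑ x : G, (1 - h x) := by
      rw [Finset.sum_sub_distrib, Finset.sum_const, Finset.card_univ, hv]
      simp
    rw [this]
    apply Finset.even_sum
    intro x _
    rcases hh x with h1 | h1 <;> simp [h1]
  by_contra hodd
  have hve : Even (v:ℤ) := by
    rw [Int.even_coe_nat]
    exact Nat.not_odd_iff_even.mp hodd
  have hFe : Even F := by
    have := (heven f hf).sub hve
    simpa [hF] using (by simpa using this.neg : Even F)
  have hGe : Even Gg := by
    have := (heven g hg).sub hve
    simpa [hGg] using (by simpa using this.neg : Even Gg)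
  obtain ⟨k, hk⟩ := hFe
  obtain ⟨m, hm⟩ := hGe
  have h4 : (4:ℤ) ∣ 2 := ⟨k^2 + m^2, by rw [hk, hm] at key; ring_nf; ring_nf at key; linarith⟩
  norm_num at h4
end

section
/- Let (X,Y) be a difference family with parameters (v; k₁, k₂; λ) in an abelian group G of odd order v > 1, where λ = k₁ + k₂ − (v+1)/2. Then each of k₁ and k₂ belongs to the set {(v−1)/2, (v+1)/2}. -/
/-!
Counting the pairs of `X × X` and `Y × Y` by their difference gives
`k₁(k₁ - 1) + k₂(k₂ - 1) = λ(v - 1)`. Substituting `λ = k₁ + k₂ - (v + 1)/2` and completing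
the square turns this into `(2k₁ - v)² + (2k₂ - v)² = 2`, whose only integer solutions have
`2kᵢ - v = ±1`.
-/

open Finset

section DiffCount

variable {G : Type*} [AddGroup G] [DecidableEq G]

def diffCount (X : Finset G) (s : G) : ℕ :=
  #((X ×ˢ X).filter (fun p => p.1 - p.2 = s))

theorem diffCount_zero (X : Finset G) : diffCount X 0 = #X := by
  simp_rw [diffCount, sub_eq_zero, ← diag_eq_filter, diag_card]

variable [Fintype G]

theorem sum_diffCount (X : Finset G) : ∑ s, diffCount X s = #X * #X := by
  rw [← card_product]
  exact (card_eq_sum_card_fiberwise fun p _ => mem_univ (p.1 - p.2)).symm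

theorem card_add_sum_diffCount_erase_zero (X : Finset G) :
    #X + ∑ s ∈ univ.erase 0, diffCount X s = #X * #X := by
  nth_rw 1 [← diffCount_zero]
  rw [add_sum_erase _ _ (mem_univ 0), sum_diffCount]

theorem card_mul_card_add_card_mul_card_of_diffCount {X Y : Finset G} {lam : ℕ}
    (hDF : ∀ s : G, s ≠ 0 → diffCount X s + diffCount Y s = lam) :
    #X * #X + #Y * #Y = #X + #Y + (Fintype.card G - 1) * lam := by
  have hsum : ∑ s ∈ univ.erase (0 : G), (diffCount X s + diffCount Y s)
      = (Fintype.card G - 1) * lam := by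
    rw [sum_congr rfl fun s hs => hDF s (ne_of_mem_erase hs), sum_const,
      card_erase_of_mem (mem_univ 0), card_univ, smul_eq_mul]
  rw [sum_add_distrib] at hsum
  rw [← card_add_sum_diffCount_erase_zero X, ← card_add_sum_diffCount_erase_zero Y, ← hsum]
  ring

end DiffCount

theorem sq_two_mul_sub_add_sq_two_mul_sub_eq_two {k₁ k₂ v lam : ℤ}
    (hcount : k₁ * k₁ + k₂ * k₂ = k₁ + k₂ + (v - 1) * lam)
    (hlam : 2 * lam = 2 * (k₁ + k₂) - (v + 1)) :
    (2 * k₁ - v) ^ 2 + (2 * k₂ - v) ^ 2 = 2 := by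
  linear_combination 4 * hcount + 2 * (v - 1) * hlam

theorem Int.eq_one_or_eq_neg_one_of_sq_add_sq_eq_two {a b : ℤ} (h : a ^ 2 + b ^ 2 = 2) :
    a = 1 ∨ a = -1 := by
  obtain ⟨ha₁, ha₂⟩ : -1 ≤ a ∧ a ≤ 1 := by constructor <;> nlinarith [sq_nonneg b]
  obtain ⟨hb₁, hb₂⟩ : -1 ≤ b ∧ b ≤ 1 := by constructor <;> nlinarith [sq_nonneg a]
  interval_cases a <;> interval_cases b <;> simp_all

theorem eq_pred_div_two_or_eq_succ_div_two_of_sq_add_sq_eq_two {k k' v : ℕ}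
    (h : (2 * (k : ℤ) - v) ^ 2 + (2 * (k' : ℤ) - v) ^ 2 = 2) :
    k = (v - 1) / 2 ∨ k = (v + 1) / 2 := by
  rcases Int.eq_one_or_eq_neg_one_of_sq_add_sq_eq_two h with h | h <;> omega

theorem legendre_df_block_sizes_general
    {G : Type*} [AddCommGroup G] [Fintype G] [DecidableEq G]
    (v : ℕ) (hv : Fintype.card G = v) (hvodd : Odd v)
    (X Y : Finset G) (k₁ k₂ lam : ℕ)
    (hk₁ : X.card = k₁) (hk₂ : Y.card = k₂)
    (hlam : (lam : ℤ) = k₁ + k₂ - (v + 1) / 2)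
    (hDF : ∀ s : G, s ≠ 0 →
        ((X ×ˢ X).filter (fun p => p.1 - p.2 = s)).card
          + ((Y ×ˢ Y).filter (fun p => p.1 - p.2 = s)).card = lam) :
    (k₁ = (v - 1) / 2 ∨ k₁ = (v + 1) / 2) ∧
    (k₂ = (v - 1) / 2 ∨ k₂ = (v + 1) / 2) := by
  have hcount := card_mul_card_add_card_mul_card_of_diffCount hDF
  rw [hk₁, hk₂, hv] at hcount
  have hcountZ : (k₁ : ℤ) * k₁ + k₂ * k₂ = k₁ + k₂ + (v - 1) * lam := by
    rw [← Nat.cast_pred hvodd.pos]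
    exact_mod_cast hcount
  -- `(v + 1) / 2` is integer division, exact only because `v` is odd.
  have hlam2 : 2 * (lam : ℤ) = 2 * (k₁ + k₂) - (v + 1) := by
    obtain ⟨m, rfl⟩ := hvodd
    push_cast at hlam ⊢
    omega
  have hsq := sq_two_mul_sub_add_sq_two_mul_sub_eq_two hcountZ hlam2
  exact ⟨eq_pred_div_two_or_eq_succ_div_two_of_sq_add_sq_eq_two hsq,
    eq_pred_div_two_or_eq_succ_div_two_of_sq_add_sq_eq_two (k' := k₁) (by linarith [hsq])⟩

/-- Let `(X,Y)` be a difference family with parameters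
`(v; k₁, k₂; λ)` in an abelian group `G` of odd order `v > 1`, where
`λ = k₁ + k₂ - (v+1)/2`. Then each of `k₁` and `k₂` belongs to
`{(v-1)/2, (v+1)/2}`. -/
theorem legendre_df_block_sizes
    {G : Type*} [AddCommGroup G] [Fintype G] [DecidableEq G]
    (v : ℕ) (hv : Fintype.card G = v) (hv1 : 1 < v) (hvodd : Odd v)
    (X Y : Finset G) (k₁ k₂ lam : ℕ)
    (hk₁ : X.card = k₁) (hk₂ : Y.card = k₂)
    (hlam : (lam : ℤ) = k₁ + k₂ - (v + 1) / 2)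
    (hDF : ∀ s : G, s ≠ 0 →
        ((X ×ˢ X).filter (fun p => p.1 - p.2 = s)).card
          + ((Y ×ˢ Y).filter (fun p => p.1 - p.2 = s)).card = lam) :
    (k₁ = (v - 1) / 2 ∨ k₁ = (v + 1) / 2) ∧
    (k₂ = (v - 1) / 2 ∨ k₂ = (v + 1) / 2) :=
  legendre_df_block_sizes_general v hv hvodd X Y k₁ k₂ lam hk₁ hk₂ hlam hDF
end
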